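/- arXiv:1005.4938 — 2 statements merged into one kernel-verified Lean document; each statement's English description precedes it below -/
import Mathlib

section
/- Under the assumptions of the previous scheme, if Σ_α |U^n_α| < ∞ then Σ_α U^{n+1}_α = Σ_α U^n_α (the scheme is conservative). -/
open MeasureTheory ENNReal

set_option maxHeartbeats 1000000 in
/-- The explicit scheme is conservative: if `Σ_α |U^n_α| < ∞` then
`Σ_α U^{n+1}_α = Σ_α U^n_α`. -/
theorem scheme_conservative (d : ℕ) (hd : 0 < d) (dx dt LF LA lam clam : ℝ)
    (hdx : 0 < dx) (hdt : 0 < dt) (hLF : 0 ≤ LF) (hLA : 0 ≤ LA)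
    (hlam : lam ∈ Set.Ioo (0:ℝ) 2) (hclam : 0 < clam)
    (F : Fin d → ℝ → ℝ → ℝ)
    (hF : ∀ l a b a' b', |F l a b - F l a' b'| ≤ LF * (|a - a'| + |b - b'|))
    (A : ℝ → ℝ) (hA : ∀ a b, |A a - A b| ≤ LA * |a - b|) (hA0 : A 0 = 0)
    (G : {β : Fin d → ℤ // β ≠ 0} → ℝ) (hG : ∀ β, 0 ≤ G β) (hGsum : Summable G)
    (hGbound : ∑' β, G β ≤ clam * (2 / dx) ^ lam *
      ∫ z in {z : EuclideanSpace ℝ (Fin d) | 1 < ‖z‖}, ‖z‖ ^ (-(d:ℝ) - lam))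
    (U Unext : (Fin d → ℤ) → ℝ)
    (hU : Summable fun α => |U α|)
    (hnext : ∀ α, Unext α = U α
      - dt * ∑ l : Fin d,
          (F l (U α) (U (α + Pi.single l 1)) -
            F l (U (α - Pi.single l 1)) (U α)) / dx
      + dt * ∑' β : {β : Fin d → ℤ // β ≠ 0},
          G β * (A (U (α + β.1)) - A (U α))) :
    ∑' α, Unext α = ∑' α, U α := by
  have hUsum : Summable U := hU.of_abs
  -- translation helpers
  have trS : ∀ (f : (Fin d → ℤ) → ℝ) (c : Fin d → ℤ), Summable f →
      Summable (fun α => f (α + c)) := fun f c hf => (Equiv.addRight c).summable_iff.mpr hf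
  have trT : ∀ (f : (Fin d → ℤ) → ℝ) (c : Fin d → ℤ),
      (∑' α, f (α + c)) = ∑' α, f α := fun f c => (Equiv.addRight c).tsum_eq f
  have trS' : ∀ (f : (Fin d → ℤ) → ℝ) (c : Fin d → ℤ), Summable f →
      Summable (fun α => f (α - c)) := fun f c hf => (Equiv.subRight c).summable_iff.mpr hf
  have trT' : ∀ (f : (Fin d → ℤ) → ℝ) (c : Fin d → ℤ),
      (∑' α, f (α - c)) = ∑' α, f α := fun f c => (Equiv.subRight c).tsum_eq f
  -- A facts
  have hAb : ∀ x : ℝ, |A x| ≤ LA * |x| := fun x => by simpa [hA0] using hA x 0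
  have hAUabs : Summable fun α => |A (U α)| :=
    Summable.of_nonneg_of_le (fun _ => abs_nonneg _) (fun α => hAb (U α)) (hU.mul_left LA)
  have hAUsum : Summable fun α => A (U α) := hAUabs.of_abs
  -- flux terms
  have hgsum : ∀ l : Fin d, Summable (fun α => F l (U α) (U (α + Pi.single l 1)) - F l 0 0) := by
    intro l
    apply Summable.of_abs
    refine Summable.of_nonneg_of_le (fun _ => abs_nonneg _) (fun α => ?_)
      ((hU.add (trS _ (Pi.single l 1) hU)).mul_left LF)
    simpa using hF l (U α) (U (α + Pi.single l 1)) 0 0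
  have hflrw : ∀ l : Fin d, (fun α => (F l (U α) (U (α + Pi.single l 1)) -
      F l (U (α - Pi.single l 1)) (U α)) / dx)
      = fun α => ((F l (U α) (U (α + Pi.single l 1)) - F l 0 0) -
        (F l (U (α - Pi.single l 1)) (U ((α - Pi.single l 1) + Pi.single l 1)) - F l 0 0)) / dx := by
    intro l; funext α; rw [sub_add_cancel]; ring
  have hgsum' : ∀ l : Fin d, Summable (fun α =>
      F l (U (α - Pi.single l 1)) (U ((α - Pi.single l 1) + Pi.single l 1)) - F l 0 0) :=
    fun l => trS' _ (Pi.single l 1) (hgsum l)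
  have hflsum : ∀ l : Fin d, Summable (fun α => (F l (U α) (U (α + Pi.single l 1)) -
      F l (U (α - Pi.single l 1)) (U α)) / dx) := by
    intro l
    rw [hflrw l]
    exact ((hgsum l).sub (hgsum' l)).div_const dx
  have hS1sum : Summable (fun α => ∑ l : Fin d, (F l (U α) (U (α + Pi.single l 1)) -
      F l (U (α - Pi.single l 1)) (U α)) / dx) := summable_sum (fun l _ => hflsum l)
  have hS1zero : (∑' α, ∑ l : Fin d, (F l (U α) (U (α + Pi.single l 1)) -
      F l (U (α - Pi.single l 1)) (U α)) / dx) = 0 := by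
    rw [Summable.tsum_finsetSum (fun l _ => hflsum l)]
    refine Finset.sum_eq_zero fun l _ => ?_
    have e0 : (∑' α, (F l (U α) (U (α + Pi.single l 1)) -
        F l (U (α - Pi.single l 1)) (U α)) / dx)
      = ∑' α, ((F l (U α) (U (α + Pi.single l 1)) - F l 0 0) -
        (F l (U (α - Pi.single l 1)) (U ((α - Pi.single l 1) + Pi.single l 1)) - F l 0 0)) / dx :=
      congrArg tsum (hflrw l)
    have e1 : (∑' α, ((F l (U α) (U (α + Pi.single l 1)) - F l 0 0) -
        (F l (U (α - Pi.single l 1)) (U ((α - Pi.single l 1) + Pi.single l 1)) - F l 0 0)) / dx)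
      = (∑' α, ((F l (U α) (U (α + Pi.single l 1)) - F l 0 0) -
        (F l (U (α - Pi.single l 1)) (U ((α - Pi.single l 1) + Pi.single l 1)) - F l 0 0))) / dx :=
      tsum_div_const
    have e2 : (∑' α, ((F l (U α) (U (α + Pi.single l 1)) - F l 0 0) -
        (F l (U (α - Pi.single l 1)) (U ((α - Pi.single l 1) + Pi.single l 1)) - F l 0 0)))
      = (∑' α, (F l (U α) (U (α + Pi.single l 1)) - F l 0 0)) -
        ∑' α, (F l (U (α - Pi.single l 1)) (U ((α - Pi.single l 1) + Pi.single l 1)) - F l 0 0) :=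
      Summable.tsum_sub (hgsum l) (hgsum' l)
    have e3 : (∑' α, (F l (U (α - Pi.single l 1)) (U ((α - Pi.single l 1) + Pi.single l 1)) - F l 0 0))
      = ∑' α, (F l (U α) (U (α + Pi.single l 1)) - F l 0 0) :=
      trT' (fun α => F l (U α) (U (α + Pi.single l 1)) - F l 0 0) (Pi.single l 1)
    rw [e0, e1, e2, e3, sub_self, zero_div]
  -- dominating function on the product
  have hQslice : ∀ β : {β : Fin d → ℤ // β ≠ 0},
      Summable (fun α => G β * (LA * |U (α + β.1)| + LA * |U α|)) :=
    fun β => (((trS _ β.1 hU).mul_left LA).add (hU.mul_left LA)).mul_left (G β)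
  have hQnn : ∀ p : {β : Fin d → ℤ // β ≠ 0} × (Fin d → ℤ),
      0 ≤ G p.1 * (LA * |U (p.2 + p.1.1)| + LA * |U p.2|) :=
    fun p => mul_nonneg (hG p.1) (add_nonneg (mul_nonneg hLA (abs_nonneg _))
      (mul_nonneg hLA (abs_nonneg _)))
  have hQouter : (fun β : {β : Fin d → ℤ // β ≠ 0} =>
      ∑' α, G β * (LA * |U (α + β.1)| + LA * |U α|))
      = fun β => G β * (LA * (∑' α, |U α|) + LA * (∑' α, |U α|)) := by
    funext β
    have e1 : (∑' α, G β * (LA * |U (α + β.1)| + LA * |U α|))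
        = G β * ∑' α, (LA * |U (α + β.1)| + LA * |U α|) := tsum_mul_left
    have e2 : (∑' α, (LA * |U (α + β.1)| + LA * |U α|))
        = (∑' α, LA * |U (α + β.1)|) + ∑' α, LA * |U α| :=
      Summable.tsum_add ((trS _ β.1 hU).mul_left LA) (hU.mul_left LA)
    have e3 : (∑' α, LA * |U (α + β.1)|) = LA * ∑' α, |U (α + β.1)| := tsum_mul_left
    have e4 : (∑' α, LA * |U α|) = LA * ∑' α, |U α| := tsum_mul_left
    have e5 : (∑' α, |U (α + β.1)|) = ∑' α, |U α| := trT (fun α => |U α|) β.1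
    rw [e1, e2, e3, e4, e5]
  have hQsum : Summable (fun p : {β : Fin d → ℤ // β ≠ 0} × (Fin d → ℤ) =>
      G p.1 * (LA * |U (p.2 + p.1.1)| + LA * |U p.2|)) := by
    refine (summable_prod_of_nonneg hQnn).mpr ⟨fun β => hQslice β, ?_⟩
    have : (fun β : {β : Fin d → ℤ // β ≠ 0} =>
        ∑' α, G β * (LA * |U (α + β.1)| + LA * |U α|))
        = fun β => G β * (LA * (∑' α, |U α|) + LA * (∑' α, |U α|)) := hQouter
    exact this ▸ (hGsum.mul_right _)
  have hQsum' : Summable (fun p : (Fin d → ℤ) × {β : Fin d → ℤ // β ≠ 0} =>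
      G p.2 * (LA * |U (p.1 + p.2.1)| + LA * |U p.1|)) :=
    (Equiv.prodComm (Fin d → ℤ) {β : Fin d → ℤ // β ≠ 0}).summable_iff.mpr hQsum
  -- pointwise bound
  have hPle : ∀ (β : {β : Fin d → ℤ // β ≠ 0}) (α : Fin d → ℤ),
      |G β * (A (U (α + β.1)) - A (U α))| ≤ G β * (LA * |U (α + β.1)| + LA * |U α|) := by
    intro β α
    rw [abs_mul, abs_of_nonneg (hG β)]
    refine mul_le_mul_of_nonneg_left ?_ (hG β)
    calc |A (U (α + β.1)) - A (U α)| ≤ |A (U (α + β.1))| + |A (U α)| := abs_sub _ _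
      _ ≤ LA * |U (α + β.1)| + LA * |U α| := add_le_add (hAb _) (hAb _)
  -- summability of P on the product
  have hPsum : Summable (fun p : {β : Fin d → ℤ // β ≠ 0} × (Fin d → ℤ) =>
      G p.1 * (A (U (p.2 + p.1.1)) - A (U p.2))) := by
    apply Summable.of_abs
    exact Summable.of_nonneg_of_le (fun _ => abs_nonneg _) (fun p => hPle p.1 p.2) hQsum
  have hPsliceB : ∀ β : {β : Fin d → ℤ // β ≠ 0},
      Summable (fun α => G β * (A (U (α + β.1)) - A (U α))) :=
    fun β => (((trS _ β.1 hAUsum).sub hAUsum)).mul_left (G β)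
  have hQsliceA : ∀ α : Fin d → ℤ, Summable (fun β : {β : Fin d → ℤ // β ≠ 0} =>
      G β * (LA * |U (α + β.1)| + LA * |U α|)) := fun α => hQsum'.prod_factor α
  have hPsliceA : ∀ α : Fin d → ℤ, Summable (fun β : {β : Fin d → ℤ // β ≠ 0} =>
      G β * (A (U (α + β.1)) - A (U α))) := by
    intro α
    apply Summable.of_abs
    exact Summable.of_nonneg_of_le (fun _ => abs_nonneg _) (fun β => hPle β α) (hQsliceA α)
  -- each inner diffusion sum vanishes
  have hinner : ∀ β : {β : Fin d → ℤ // β ≠ 0},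
      (∑' α, G β * (A (U (α + β.1)) - A (U α))) = 0 := by
    intro β
    have e1 : (∑' α, G β * (A (U (α + β.1)) - A (U α)))
        = G β * ∑' α, (A (U (α + β.1)) - A (U α)) := tsum_mul_left
    have e2 : (∑' α, (A (U (α + β.1)) - A (U α)))
        = (∑' α, A (U (α + β.1))) - ∑' α, A (U α) := Summable.tsum_sub (trS _ β.1 hAUsum) hAUsum
    have e3 : (∑' α, A (U (α + β.1))) = ∑' α, A (U α) := trT (fun α => A (U α)) β.1
    rw [e1, e2, e3, sub_self, mul_zero]
  have hS2sum : Summable (fun α => ∑' β : {β : Fin d → ℤ // β ≠ 0},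
      G β * (A (U (α + β.1)) - A (U α))) := by
    apply Summable.of_abs
    have houter : Summable (fun α => ∑' β : {β : Fin d → ℤ // β ≠ 0},
        G β * (LA * |U (α + β.1)| + LA * |U α|)) :=
      ((summable_prod_of_nonneg (fun p => hQnn (p.2, p.1))).mp hQsum').2
    refine Summable.of_nonneg_of_le (fun _ => abs_nonneg _) (fun α => ?_) houter
    calc |∑' β : {β : Fin d → ℤ // β ≠ 0}, G β * (A (U (α + β.1)) - A (U α))|
        ≤ ∑' β : {β : Fin d → ℤ // β ≠ 0}, |G β * (A (U (α + β.1)) - A (U α))| := by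
          simpa only [Real.norm_eq_abs] using
            norm_tsum_le_tsum_norm
              (f := fun β : {β : Fin d → ℤ // β ≠ 0} => G β * (A (U (α + β.1)) - A (U α)))
              (by simpa only [Real.norm_eq_abs] using (hPsliceA α).abs)
      _ ≤ ∑' β : {β : Fin d → ℤ // β ≠ 0}, G β * (LA * |U (α + β.1)| + LA * |U α|) :=
          Summable.tsum_le_tsum (fun β => hPle β α) (hPsliceA α).abs (hQsliceA α)
  have hS2zero : (∑' α, ∑' β : {β : Fin d → ℤ // β ≠ 0},
      G β * (A (U (α + β.1)) - A (U α))) = 0 := by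
    have h := Summable.tsum_comm' (f := fun (β : {β : Fin d → ℤ // β ≠ 0}) (α : Fin d → ℤ) =>
      G β * (A (U (α + β.1)) - A (U α))) hPsum hPsliceB hPsliceA
    have h2 : (∑' β : {β : Fin d → ℤ // β ≠ 0},
        ∑' α, G β * (A (U (α + β.1)) - A (U α))) = 0 := by
      rw [tsum_congr hinner]; exact tsum_zero
    exact h.trans h2
  -- put it together
  have h1 : Summable (fun α => U α - dt * ∑ l : Fin d, (F l (U α) (U (α + Pi.single l 1)) -
      F l (U (α - Pi.single l 1)) (U α)) / dx) := hUsum.sub (hS1sum.mul_left dt)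
  have h2 : Summable (fun α => dt * ∑' β : {β : Fin d → ℤ // β ≠ 0},
      G β * (A (U (α + β.1)) - A (U α))) := hS2sum.mul_left dt
  have k1 : (∑' α, ((U α - dt * ∑ l : Fin d, (F l (U α) (U (α + Pi.single l 1)) -
        F l (U (α - Pi.single l 1)) (U α)) / dx)
      + dt * ∑' β : {β : Fin d → ℤ // β ≠ 0}, G β * (A (U (α + β.1)) - A (U α))))
      = (∑' α, (U α - dt * ∑ l : Fin d, (F l (U α) (U (α + Pi.single l 1)) -
        F l (U (α - Pi.single l 1)) (U α)) / dx))
      + ∑' α, dt * ∑' β : {β : Fin d → ℤ // β ≠ 0}, G β * (A (U (α + β.1)) - A (U α)) :=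
    Summable.tsum_add h1 h2
  have k2 : (∑' α, (U α - dt * ∑ l : Fin d, (F l (U α) (U (α + Pi.single l 1)) -
        F l (U (α - Pi.single l 1)) (U α)) / dx))
      = (∑' α, U α) - ∑' α, dt * ∑ l : Fin d, (F l (U α) (U (α + Pi.single l 1)) -
        F l (U (α - Pi.single l 1)) (U α)) / dx :=
    Summable.tsum_sub hUsum (hS1sum.mul_left dt)
  have k3 : (∑' α, dt * ∑ l : Fin d, (F l (U α) (U (α + Pi.single l 1)) -
        F l (U (α - Pi.single l 1)) (U α)) / dx)
      = dt * ∑' α, ∑ l : Fin d, (F l (U α) (U (α + Pi.single l 1)) -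
        F l (U (α - Pi.single l 1)) (U α)) / dx := tsum_mul_left
  have k4 : (∑' α, dt * ∑' β : {β : Fin d → ℤ // β ≠ 0}, G β * (A (U (α + β.1)) - A (U α)))
      = dt * ∑' α, ∑' β : {β : Fin d → ℤ // β ≠ 0}, G β * (A (U (α + β.1)) - A (U α)) :=
    tsum_mul_left
  calc ∑' α, Unext α
      = ∑' α, ((U α - dt * ∑ l : Fin d, (F l (U α) (U (α + Pi.single l 1)) -
          F l (U (α - Pi.single l 1)) (U α)) / dx)
        + dt * ∑' β : {β : Fin d → ℤ // β ≠ 0}, G β * (A (U (α + β.1)) - A (U α))) :=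
        tsum_congr hnext
    _ = ∑' α, U α := by
        rw [k1, k2, k3, k4, hS1zero, hS2zero]; ring
end

section
/- The explicit scheme U^{n+1}_α = U^n_α − Δt Σ_{l=1}^d D_l⁻ F_l(U^n_α, U^n_{α+e_l}) + Δt Σ_{β≠0} G_β (A(U^n_{α+β}) − A(U^n_α)) is monotone (i.e. the right-hand side is non-decreasing in every variable U^n_β) provided the CFL condition 2d L_F Δt/Δx + (c_λ 2^λ L_A ∫_{|z|>1}|z|^{−d−λ}dz) · Δt/Δx^λ ≤ 1 holds. -/
open MeasureTheory ENNReal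

/-- Monotonicity of the explicit scheme under the CFL condition
`2dL_F Δt/Δx + c_λ 2^λ L_A (∫_{|z|>1}|z|^{-d-λ}dz) Δt/Δx^λ ≤ 1`: the scheme map `H`
is non-decreasing in every variable. -/
theorem scheme_monotone (d : ℕ) (hd : 0 < d) (dx dt LF LA lam clam : ℝ)
    (hdx : 0 < dx) (hdt : 0 < dt) (hLF : 0 ≤ LF) (hLA : 0 ≤ LA)
    (hlam : lam ∈ Set.Ioo (0:ℝ) 2) (hclam : 0 < clam)
    (F : Fin d → ℝ → ℝ → ℝ)
    (hF : ∀ l a b a' b', |F l a b - F l a' b'| ≤ LF * (|a - a'| + |b - b'|))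
    (hFmono : ∀ l b, Monotone fun a => F l a b)
    (hFanti : ∀ l a, Antitone fun b => F l a b)
    (A : ℝ → ℝ) (hAmono : Monotone A)
    (hA : ∀ a b, |A a - A b| ≤ LA * |a - b|)
    (G : {β : Fin d → ℤ // β ≠ 0} → ℝ) (hG : ∀ β, 0 < G β) (hGsum : Summable G)
    (hGbound : ∑' β, G β ≤ clam * (2 / dx) ^ lam *
      ∫ z in {z : EuclideanSpace ℝ (Fin d) | 1 < ‖z‖}, ‖z‖ ^ (-(d:ℝ) - lam))
    (H : ((Fin d → ℤ) → ℝ) → (Fin d → ℤ) → ℝ)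
    (hH : ∀ W α, H W α = W α
      - dt * ∑ l : Fin d,
          (F l (W α) (W (α + Pi.single l 1)) -
            F l (W (α - Pi.single l 1)) (W α)) / dx
      + dt * ∑' β : {β : Fin d → ℤ // β ≠ 0},
          G β * (A (W (α + β.1)) - A (W α)))
    (hCFL : 2 * d * LF * dt / dx +
      clam * 2 ^ lam * LA *
        (∫ z in {z : EuclideanSpace ℝ (Fin d) | 1 < ‖z‖}, ‖z‖ ^ (-(d:ℝ) - lam)) *
        dt / dx ^ lam ≤ 1) :
    ∀ U V : (Fin d → ℤ) → ℝ, (Summable fun α => |U α|) →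
      (Summable fun α => |V α|) → (∀ β, U β ≤ V β) → ∀ α, H U α ≤ H V α := by
  intro U V hUs hVs hUV α
  set I : ℝ := ∫ z in {z : EuclideanSpace ℝ (Fin d) | 1 < ‖z‖}, ‖z‖ ^ (-(d:ℝ) - lam) with hI
  have hInn : 0 ≤ I := integral_nonneg fun z => Real.rpow_nonneg (norm_nonneg z) _
  set c : ℝ := V α - U α with hc
  have hc0 : 0 ≤ c := sub_nonneg.2 (hUV α)
  -- summability of the nonlocal sums
  have key_sum : ∀ W : (Fin d → ℤ) → ℝ, (Summable fun γ => |W γ|) →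
      Summable (fun β : {β : Fin d → ℤ // β ≠ 0} => G β * (A (W (α + β.1)) - A (W α))) := by
    intro W hW
    apply Summable.of_abs
    refine Summable.of_nonneg_of_le (f := fun β : {β : Fin d → ℤ // β ≠ 0} =>
      (∑' γ, G γ) * (LA * |W (α + β.1)|) + G β * (LA * |W α|))
      (fun β => abs_nonneg _) (fun β => ?_) ?_
    · 
      rw [abs_mul, abs_of_pos (hG β)]
      have hGle : G β ≤ ∑' γ, G γ := Summable.le_tsum hGsum β (fun γ _ => (hG γ).le)
      calc G β * |A (W (α + β.1)) - A (W α)|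
          ≤ G β * (LA * (|W (α + β.1)| + |W α|)) := by
            refine mul_le_mul_of_nonneg_left ?_ (hG β).le
            exact (hA _ _).trans (mul_le_mul_of_nonneg_left (abs_sub _ _) hLA)
        _ = G β * (LA * |W (α + β.1)|) + G β * (LA * |W α|) := by ring
        _ ≤ (∑' γ, G γ) * (LA * |W (α + β.1)|) + G β * (LA * |W α|) := by
            have := mul_le_mul_of_nonneg_right hGle
              (mul_nonneg hLA (abs_nonneg (W (α + β.1))))
            linarith
    · apply Summable.add
      · apply Summable.mul_left
        have hinj : Function.Injective
            (fun β : {β : Fin d → ℤ // β ≠ 0} => α + β.1) := by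
          intro a b h
          exact Subtype.ext (by simpa using h)
        exact (hW.comp_injective hinj).mul_left LA
      · exact hGsum.mul_right _
  have hSU := key_sum U hUs
  have hSV := key_sum V hVs
  -- lower bound for the nonlocal difference
  have hterm : ∀ β : {β : Fin d → ℤ // β ≠ 0},
      G β * (-(LA * c)) ≤
        G β * (A (V (α + β.1)) - A (V α)) - G β * (A (U (α + β.1)) - A (U α)) := by
    intro β
    have h1 : A (U (α + β.1)) ≤ A (V (α + β.1)) := hAmono (hUV _)
    have h2 : A (V α) - A (U α) ≤ LA * c := by
      have := (le_abs_self (A (V α) - A (U α))).trans (hA (V α) (U α))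
      rwa [abs_of_nonneg hc0] at this
    have : -(LA * c) ≤ (A (V (α + β.1)) - A (V α)) - (A (U (α + β.1)) - A (U α)) := by
      linarith
    calc G β * (-(LA * c)) ≤ G β *
          ((A (V (α + β.1)) - A (V α)) - (A (U (α + β.1)) - A (U α))) :=
        mul_le_mul_of_nonneg_left this (hG β).le
      _ = _ := by ring
  have hnonlocal : -((∑' γ, G γ) * (LA * c)) ≤
      (∑' β : {β : Fin d → ℤ // β ≠ 0}, G β * (A (V (α + β.1)) - A (V α))) -
      (∑' β : {β : Fin d → ℤ // β ≠ 0}, G β * (A (U (α + β.1)) - A (U α))) := by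
    have h := Summable.tsum_le_tsum hterm (hGsum.mul_right _) (hSV.sub hSU)
    rw [tsum_mul_right, Summable.tsum_sub hSV hSU] at h
    linarith [h]
  -- flux bound, term by term
  have hflux : ∀ l : Fin d,
      ((F l (V α) (V (α + Pi.single l 1)) - F l (V (α - Pi.single l 1)) (V α)) -
       (F l (U α) (U (α + Pi.single l 1)) - F l (U (α - Pi.single l 1)) (U α))) ≤
        2 * LF * c := by
    intro l
    have h1 : F l (V α) (V (α + Pi.single l 1)) ≤ F l (V α) (U (α + Pi.single l 1)) :=
      hFanti l (V α) (hUV _)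
    have h2 : F l (V α) (U (α + Pi.single l 1)) - F l (U α) (U (α + Pi.single l 1)) ≤
        LF * c := by
      have h := (le_abs_self _).trans
        (hF l (V α) (U (α + Pi.single l 1)) (U α) (U (α + Pi.single l 1)))
      rw [sub_self, abs_zero, abs_of_nonneg hc0] at h
      linarith
    have h3 : F l (U (α - Pi.single l 1)) (V α) ≤ F l (V (α - Pi.single l 1)) (V α) :=
      hFmono l (V α) (hUV _)
    have h4 : F l (U (α - Pi.single l 1)) (U α) - F l (U (α - Pi.single l 1)) (V α) ≤
        LF * c := by
      have h := (le_abs_self _).trans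
        (hF l (U (α - Pi.single l 1)) (U α) (U (α - Pi.single l 1)) (V α))
      rw [sub_self, abs_zero, abs_sub_comm, abs_of_nonneg hc0] at h
      linarith
    linarith
  have hfluxsum :
      (∑ l : Fin d, (F l (V α) (V (α + Pi.single l 1)) -
          F l (V (α - Pi.single l 1)) (V α)) / dx) -
      (∑ l : Fin d, (F l (U α) (U (α + Pi.single l 1)) -
          F l (U (α - Pi.single l 1)) (U α)) / dx) ≤
        (d : ℝ) * (2 * LF * c / dx) := by
    rw [← Finset.sum_sub_distrib]
    calc (∑ l : Fin d, ((F l (V α) (V (α + Pi.single l 1)) -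
              F l (V (α - Pi.single l 1)) (V α)) / dx -
            (F l (U α) (U (α + Pi.single l 1)) -
              F l (U (α - Pi.single l 1)) (U α)) / dx))
        ≤ ∑ _l : Fin d, 2 * LF * c / dx := by
          refine Finset.sum_le_sum fun l _ => ?_
          rw [div_sub_div_same]
          exact div_le_div_of_nonneg_right (hflux l) hdx.le
      _ = (d : ℝ) * (2 * LF * c / dx) := by
          simp [Finset.sum_const, nsmul_eq_mul]
  -- put it together
  rw [hH, hH]
  have hpow : ((2 : ℝ) / dx) ^ lam = 2 ^ lam / dx ^ lam :=
    Real.div_rpow (by norm_num) hdx.le lam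
  have hB : (∑' γ, G γ) * (LA * c) ≤
      clam * 2 ^ lam * LA * I * c / dx ^ lam := by
    have h := mul_le_mul_of_nonneg_right hGbound (mul_nonneg hLA hc0)
    calc (∑' γ, G γ) * (LA * c) ≤ clam * (2 / dx) ^ lam * I * (LA * c) := h
      _ = clam * 2 ^ lam * LA * I * c / dx ^ lam := by
          rw [hpow]; ring
  have hfl : dt * ((∑ l : Fin d, (F l (V α) (V (α + Pi.single l 1)) -
          F l (V (α - Pi.single l 1)) (V α)) / dx) -
      (∑ l : Fin d, (F l (U α) (U (α + Pi.single l 1)) -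
          F l (U (α - Pi.single l 1)) (U α)) / dx)) ≤
        (2 * d * LF * dt / dx) * c := by
    have := mul_le_mul_of_nonneg_left hfluxsum hdt.le
    calc dt * _ ≤ dt * ((d : ℝ) * (2 * LF * c / dx)) := this
      _ = (2 * d * LF * dt / dx) * c := by ring
  have hnl : -((clam * 2 ^ lam * LA * I * dt / dx ^ lam) * c) ≤
      dt * ((∑' β : {β : Fin d → ℤ // β ≠ 0}, G β * (A (V (α + β.1)) - A (V α))) -
        (∑' β : {β : Fin d → ℤ // β ≠ 0}, G β * (A (U (α + β.1)) - A (U α)))) := by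
    have h1 := mul_le_mul_of_nonneg_left hnonlocal hdt.le
    have h2 := mul_le_mul_of_nonneg_left hB hdt.le
    have : dt * (clam * 2 ^ lam * LA * I * c / dx ^ lam) =
        (clam * 2 ^ lam * LA * I * dt / dx ^ lam) * c := by ring
    calc -(clam * 2 ^ lam * LA * I * dt / dx ^ lam * c)
        = -(dt * (clam * 2 ^ lam * LA * I * c / dx ^ lam)) := by rw [this]
      _ ≤ -(dt * ((∑' γ, G γ) * (LA * c))) := neg_le_neg h2
      _ = dt * -((∑' γ, G γ) * (LA * c)) := by ring
      _ ≤ _ := h1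
  have hkey : (2 * d * LF * dt / dx +
      clam * 2 ^ lam * LA * I * dt / dx ^ lam) * c ≤ 1 * c :=
    mul_le_mul_of_nonneg_right hCFL hc0
  have hUVα : U α ≤ V α := hUV α
  nlinarith [hfl, hnl, hkey]
end
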